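/- arXiv:2210.05989 — 2 statements merged into one kernel-verified Lean document; each statement's English description precedes it below -/
import Mathlib

section
/- Let A : ℝ^n → ℝ^n be an invertible linear map, B : ℝ^m → ℝ^n a linear map, U = conv{u^1, …, u^q} ⊆ ℝ^m, and T = conv{t^1, …, t^d} ⊆ ℝ^n. For each pair (i,j) let x̄_{ij} ∈ ℝ^n be the unique solution of A x̄_{ij} + B u^j = t^i. Then the backward reachable set R⁻¹(T) = {x ∈ ℝ^n : ∃ u ∈ U, A x + B u ∈ T} equals conv{x̄_{ij} : 1 ≤ i ≤ d, 1 ≤ j ≤ q}. -/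
theorem stmt_2 (n m q d : ℕ)
    (A : (Fin n → ℝ) ≃ₗ[ℝ] (Fin n → ℝ)) (B : (Fin m → ℝ) →ₗ[ℝ] (Fin n → ℝ))
    (u : Fin q → (Fin m → ℝ)) (t : Fin d → (Fin n → ℝ)) :
    {x : Fin n → ℝ | ∃ v ∈ convexHull ℝ (Set.range u),
        A x + B v ∈ convexHull ℝ (Set.range t)}
      = convexHull ℝ {y : Fin n → ℝ | ∃ i j, y = A.symm (t i - B (u j))} := by
  set L : (Fin n → ℝ) × (Fin m → ℝ) →ₗ[ℝ] (Fin n → ℝ) :=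
    A.symm.toLinearMap ∘ₗ (LinearMap.fst ℝ _ _ - B ∘ₗ LinearMap.snd ℝ _ _) with hL
  have hLapp : ∀ p : (Fin n → ℝ) × (Fin m → ℝ), L p = A.symm (p.1 - B p.2) := by
    intro p; simp [hL]
  have key : {x : Fin n → ℝ | ∃ v ∈ convexHull ℝ (Set.range u),
      A x + B v ∈ convexHull ℝ (Set.range t)}
      = L '' (convexHull ℝ (Set.range t) ×ˢ convexHull ℝ (Set.range u)) := by
    ext x
    constructor
    · rintro ⟨v, hv, hw⟩
      refine ⟨(A x + B v, v), ⟨hw, hv⟩, ?_⟩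
      rw [hLapp]
      simp
    · rintro ⟨⟨w, v⟩, ⟨hw, hv⟩, rfl⟩
      refine ⟨v, hv, ?_⟩
      rw [hLapp]
      simpa using hw
  rw [key, ← convexHull_prod, L.image_convexHull]
  congr 1
  ext y
  constructor
  · rintro ⟨⟨w, v⟩, ⟨⟨i, rfl⟩, ⟨j, rfl⟩⟩, rfl⟩
    exact ⟨i, j, (hLapp _).symm ▸ rfl⟩
  · rintro ⟨i, j, rfl⟩
    exact ⟨(t i, u j), ⟨⟨i, rfl⟩, ⟨j, rfl⟩⟩, (hLapp _)⟩
end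

section
/- With the setup of the backward reachable set lemma, the inclusion conv{x̄_{ij} : i ≤ d, j ≤ q} ⊆ R⁻¹(T) holds: every convex combination z = ∑_{i,j} γ_{ij} x̄_{ij} (with γ_{ij} ≥ 0, ∑ γ_{ij} = 1) satisfies A z + B u ∈ T for the control u = ∑_j (∑_i γ_{ij}) u^j, which belongs to U. -/
theorem stmt_3 (n m q d : ℕ)
    (A : (Fin n → ℝ) ≃ₗ[ℝ] (Fin n → ℝ)) (B : (Fin m → ℝ) →ₗ[ℝ] (Fin n → ℝ))
    (u : Fin q → (Fin m → ℝ)) (t : Fin d → (Fin n → ℝ))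
    (xbar : Fin d → Fin q → (Fin n → ℝ))
    (hxbar : ∀ i j, A (xbar i j) + B (u j) = t i)
    (γ : Fin d → Fin q → ℝ)
    (hγ : ∀ i j, 0 ≤ γ i j) (hsum : ∑ i, ∑ j, γ i j = 1) :
    (∑ j, (∑ i, γ i j) • u j) ∈ convexHull ℝ (Set.range u) ∧
    A (∑ i, ∑ j, γ i j • xbar i j) + B (∑ j, (∑ i, γ i j) • u j)
      ∈ convexHull ℝ (Set.range t) ∧
    (∑ i, ∑ j, γ i j • xbar i j) ∈
      {x : Fin n → ℝ | ∃ v ∈ convexHull ℝ (Set.range u),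
        A x + B v ∈ convexHull ℝ (Set.range t)} := by
  have hu : (∑ j, (∑ i, γ i j) • u j) ∈ convexHull ℝ (Set.range u) := by
    apply (convex_convexHull ℝ _).sum_mem
    · intro j _; exact Finset.sum_nonneg fun i _ => hγ i j
    · rw [Finset.sum_comm]; exact hsum
    · intro j _; exact subset_convexHull ℝ _ (Set.mem_range_self j)
  have key : A (∑ i, ∑ j, γ i j • xbar i j) + B (∑ j, (∑ i, γ i j) • u j)
      = ∑ i, (∑ j, γ i j) • t i := by
    simp only [map_sum, map_smul, Finset.sum_smul]
    rw [Finset.sum_comm (f := fun j i => γ i j • B (u j)), ← Finset.sum_add_distrib]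
    refine Finset.sum_congr rfl fun i _ => ?_
    rw [← Finset.sum_add_distrib]
    refine Finset.sum_congr rfl fun j _ => ?_
    rw [← smul_add, hxbar]
  have ht : A (∑ i, ∑ j, γ i j • xbar i j) + B (∑ j, (∑ i, γ i j) • u j)
      ∈ convexHull ℝ (Set.range t) := by
    rw [key]
    apply (convex_convexHull ℝ _).sum_mem
    · intro i _; exact Finset.sum_nonneg fun j _ => hγ i j
    · exact hsum
    · intro i _; exact subset_convexHull ℝ _ (Set.mem_range_self i)
  exact ⟨hu, ht, ⟨_, hu, ht⟩⟩
end
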